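/- Let e, f be rank-one orthogonal projections on ℂⁿ. Then trace(e f) is a real number in [0, 1], and trace(e f) = 1 if and only if e = f. -/

import Mathlib

open ComplexOrder Matrix

variable {n : Type*} [Fintype n] [DecidableEq n]

open scoped Classical in
/-- The positive semidefinite square root (junk value `0` if the input is not PSD). -/
noncomputable def psqrt (A : Matrix n n ℂ) : Matrix n n ℂ :=
  if h : A.PosSemidef then
    (h.1.eigenvectorUnitary : Matrix n n ℂ) * diagonal ((↑) ∘ (√·) ∘ h.1.eigenvalues) *
      (star h.1.eigenvectorUnitary : Matrix n n ℂ)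
  else 0

/-- The quantum fidelity product `a * b = (b^(1/2) a b^(1/2))^(1/2)`. -/
noncomputable def fid (a b : Matrix n n ℂ) : Matrix n n ℂ :=
  psqrt (psqrt b * a * psqrt b)

lemma trace_conjT_mul (A : Matrix n n ℂ) :
    (Aᴴ * A).trace = ((∑ j, ∑ i, Complex.normSq (A i j) : ℝ) : ℂ) := by
  simp only [Matrix.trace, Matrix.diag, Matrix.mul_apply, Matrix.conjTranspose_apply]
  push_cast
  refine Finset.sum_congr rfl fun j _ => Finset.sum_congr rfl fun i _ => ?_
  rw [Complex.normSq_eq_conj_mul_self]; rfl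

lemma trace_eq_one (e : Matrix n n ℂ) (he : e.IsHermitian) (he2 : e * e = e)
    (her : e.rank = 1) : e.trace = 1 := by
  classical
  have heig : ∀ i, he.eigenvalues i = 0 ∨ he.eigenvalues i = 1 := by
    intro i
    have hv := he.mulVec_eigenvectorBasis i
    have h2 : e *ᵥ (e *ᵥ ⇑(he.eigenvectorBasis i)) = (e * e) *ᵥ ⇑(he.eigenvectorBasis i) := by
      rw [Matrix.mulVec_mulVec]
    rw [hv, Matrix.mulVec_smul, hv, he2, hv, smul_smul] at h2
    have hvne : ⇑(he.eigenvectorBasis i) ≠ 0 := by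
      have h0 := he.eigenvectorBasis.orthonormal.ne_zero i
      intro h
      apply h0
      ext j
      exact congrFun h j
    have : (he.eigenvalues i * he.eigenvalues i - he.eigenvalues i) • ⇑(he.eigenvectorBasis i) = 0 := by
      rw [sub_smul, h2, sub_self]
    rcases smul_eq_zero.mp this with h | h
    · have : he.eigenvalues i * (he.eigenvalues i - 1) = 0 := by ring_nf; linarith [h]
      rcases mul_eq_zero.mp this with h' | h'
      · exact Or.inl h'
      · exact Or.inr (by linarith)
    · exact absurd h hvne
  have htr : e.trace = ∑ i, (he.eigenvalues i : ℂ) := by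
    conv_lhs => rw [he.spectral_theorem]
    rw [Unitary.conjStarAlgAut_apply, Matrix.trace_mul_cycle]
    rw [Matrix.mem_unitaryGroup_iff'.mp (he.eigenvectorUnitary).2, Matrix.one_mul,
      Matrix.trace_diagonal]
    rfl
  have hsum : ∑ i, he.eigenvalues i = 1 := by
    have hcard : (Finset.univ.filter fun i => he.eigenvalues i ≠ 0).card = 1 := by
      rw [he.rank_eq_card_non_zero_eigs, Fintype.card_subtype] at her
      convert her using 2
    calc ∑ i, he.eigenvalues i
        = ∑ i ∈ Finset.univ.filter fun i => he.eigenvalues i ≠ 0, he.eigenvalues i :=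
          (Finset.sum_filter_ne_zero _).symm
      _ = ∑ _i ∈ Finset.univ.filter fun i => he.eigenvalues i ≠ 0, (1 : ℝ) :=
          Finset.sum_congr rfl fun i hi =>
            (heig i).resolve_left (Finset.mem_filter.mp hi).2
      _ = 1 := by rw [Finset.sum_const, hcard]; simp
  rw [htr, ← Complex.ofReal_sum, hsum, Complex.ofReal_one]


lemma conjT_trace_nonneg (A : Matrix n n ℂ) :
    0 ≤ ∑ j, ∑ i, Complex.normSq (A i j) :=
  Finset.sum_nonneg fun _ _ => Finset.sum_nonneg fun _ _ => Complex.normSq_nonneg _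

lemma conjT_trace_zero {A : Matrix n n ℂ} (h : (Aᴴ * A).trace = 0) : A = 0 := by
  rw [trace_conjT_mul, Complex.ofReal_eq_zero] at h
  have h1 := (Finset.sum_eq_zero_iff_of_nonneg
    (fun j _ => Finset.sum_nonneg fun i _ => Complex.normSq_nonneg (A i j))).mp h
  ext i j
  have h2 := (Finset.sum_eq_zero_iff_of_nonneg
    (fun i _ => Complex.normSq_nonneg (A i j))).mp (h1 j (Finset.mem_univ j)) i (Finset.mem_univ i)
  simpa using Complex.normSq_eq_zero.mp h2

lemma proj_sandwich (p q : Matrix n n ℂ) (hp : p.IsHermitian) (hp2 : p * p = p)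
    (hq : q.IsHermitian) (hq2 : q * q = q) :
    ((1 - p) * q)ᴴ * ((1 - p) * q) = q - q * p * q := by
  have h1p : (1 - p) * (1 - p) = 1 - p := by
    rw [sub_mul, one_mul, mul_sub, mul_one, hp2]; abel
  rw [Matrix.conjTranspose_mul, Matrix.conjTranspose_sub, Matrix.conjTranspose_one, hp.eq, hq.eq]
  calc q * (1 - p) * ((1 - p) * q)
      = q * ((1 - p) * (1 - p) * q) := by
        rw [Matrix.mul_assoc, ← Matrix.mul_assoc (1 - p)]
    _ = q * ((1 - p) * q) := by rw [h1p]
    _ = q * q - q * (p * q) := by rw [Matrix.sub_mul, Matrix.one_mul, Matrix.mul_sub]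
    _ = q - q * p * q := by rw [hq2, Matrix.mul_assoc]

theorem stmt16 (e f : Matrix n n ℂ)
    (he : e.IsHermitian) (he2 : e * e = e) (her : e.rank = 1)
    (hf : f.IsHermitian) (hf2 : f * f = f) (hfr : f.rank = 1) :
    (∃ r : ℝ, (e * f).trace = (r : ℂ) ∧ 0 ≤ r ∧ r ≤ 1) ∧
    ((e * f).trace = 1 ↔ e = f) := by
  have hte : e.trace = 1 := trace_eq_one e he he2 her
  have htf : f.trace = 1 := trace_eq_one f hf hf2 hfr
  have hcyc : (f * e * f).trace = (e * f).trace := by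
    rw [Matrix.trace_mul_cycle, hf2, Matrix.trace_mul_comm]
  have hcyc' : (e * f * e).trace = (e * f).trace := by
    rw [Matrix.trace_mul_cycle, he2]
  have hA : (e * f)ᴴ * (e * f) = f * e * f := by
    rw [Matrix.conjTranspose_mul, he.eq, hf.eq, Matrix.mul_assoc,
      ← Matrix.mul_assoc e e f, he2, ← Matrix.mul_assoc]
  set r₁ : ℝ := ∑ j, ∑ i, Complex.normSq ((e * f) i j) with hr₁
  have ht1 : (e * f).trace = (r₁ : ℂ) := by rw [← hcyc, ← hA, trace_conjT_mul]
  have hBH := proj_sandwich e f he he2 hf hf2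
  have htB : (((1 - e) * f)ᴴ * ((1 - e) * f)).trace = 1 - (e * f).trace := by
    rw [hBH, Matrix.trace_sub, htf, hcyc]
  set r₂ : ℝ := ∑ j, ∑ i, Complex.normSq (((1 - e) * f) i j) with hr₂
  have ht2 : ((r₂ : ℂ)) = 1 - (e * f).trace := by rw [← htB, trace_conjT_mul]
  have hr12 : r₂ = 1 - r₁ := by
    have : ((r₂ : ℂ)) = ((1 - r₁ : ℝ) : ℂ) := by rw [ht2, ht1]; push_cast; ring
    exact_mod_cast this
  have h1nn : 0 ≤ r₁ := conjT_trace_nonneg _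
  have h2nn : 0 ≤ r₂ := conjT_trace_nonneg _
  refine ⟨⟨r₁, ht1, h1nn, by linarith⟩, ?_, ?_⟩
  · intro h
    have hB0 : (1 - e) * f = 0 := by
      apply conjT_trace_zero; rw [htB, h, sub_self]
    have hef : f = e * f := by
      have := hB0
      rw [sub_mul, one_mul, sub_eq_zero] at this
      exact this
    have hC0 : (1 - f) * e = 0 := by
      apply conjT_trace_zero
      rw [proj_sandwich f e hf hf2 he he2, Matrix.trace_sub, hte, hcyc', h, sub_self]
    have hfe : e = f * e := by
      have := hC0
      rw [sub_mul, one_mul, sub_eq_zero] at this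
      exact this
    have hffe : f = f * e := by
      conv_lhs => rw [← hf.eq, hef, Matrix.conjTranspose_mul, he.eq, hf.eq]
    rw [hfe, ← hffe]
  · rintro rfl
    rw [hf2, htf]
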